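/- Let d_B, s, e_W, β, b > 0, ω > 0, λ > 0, δ > 1 and ξ_W < 0. Then there exists Ξ > 0 such that for every ξ_B ≥ Ξ and every ξ ≤ ξ_W, the functions B̲(ξ) = b e^{−β(ξ − ξ_B)²} and W̲(ξ) = e^{λ ξ} − ω e^{δ λ ξ} satisfy d_B B̲''(ξ) − s B̲'(ξ) + e_W B̲(ξ)(W̲(ξ) − B̲(ξ)) ≥ 0. -/

import Mathlib

open Real
set_option maxHeartbeats 1000000

lemma gauss_hasDerivAt (b β ξB x : ℝ) :
    HasDerivAt (fun x => b * Real.exp (-β * (x - ξB) ^ 2))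
      (b * Real.exp (-β * (x - ξB) ^ 2) * (-β * (2 * (x - ξB)))) x := by
  have h1 : HasDerivAt (fun x : ℝ => -β * (x - ξB) ^ 2) (-β * (2 * (x - ξB))) x := by
    have := (((hasDerivAt_id x).sub_const ξB).pow 2)
    simpa using this.const_mul (-β)
  simpa [mul_assoc] using h1.exp.const_mul b

lemma gauss_deriv (b β ξB : ℝ) :
    deriv (fun x => b * Real.exp (-β * (x - ξB) ^ 2))
      = fun x => b * Real.exp (-β * (x - ξB) ^ 2) * (-β * (2 * (x - ξB))) := by
  funext x; exact (gauss_hasDerivAt b β ξB x).deriv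

lemma gauss_hasDerivAt2 (b β ξB x : ℝ) :
    HasDerivAt (fun x => b * Real.exp (-β * (x - ξB) ^ 2) * (-β * (2 * (x - ξB))))
      (b * Real.exp (-β * (x - ξB) ^ 2) * ((-β * (2 * (x - ξB)))^2 + (-β * 2))) x := by
  have h1 := gauss_hasDerivAt b β ξB x
  have h2 : HasDerivAt (fun x : ℝ => -β * (2 * (x - ξB))) (-β * 2) x := by
    have := ((hasDerivAt_id x).sub_const ξB).const_mul 2
    simpa using this.const_mul (-β)
  have : HasDerivAt (fun x => b * Real.exp (-β * (x - ξB) ^ 2) * (-β * (2 * (x - ξB)))) _ x := h1.mul h2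
  convert this using 1
  ring

/-- Far to the left (`ξ ≤ ξ_W < 0`), for all sufficiently large centers `ξ_B`, the
Gaussian barrier `B̲(ξ) = b e^{−β(ξ−ξ_B)²}` is a lower solution for the browser
equation against the wood lower barrier `W̲(ξ) = e^{λξ} − ω e^{δλξ}`. -/
theorem browser_gaussian_lower_solution_far_left
    (dB s eW β b ω lam δ ξW : ℝ)
    (hdB : 0 < dB) (hs : 0 < s) (heW : 0 < eW) (hβ : 0 < β) (hb : 0 < b)
    (hω : 0 < ω) (hlam : 0 < lam) (hδ : 1 < δ) (hξW : ξW < 0) :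
    ∃ Ξ > (0 : ℝ), ∀ ξB ≥ Ξ, ∀ ξ ≤ ξW,
      dB * deriv (deriv (fun x => b * Real.exp (-β * (x - ξB) ^ 2))) ξ
        - s * deriv (fun x => b * Real.exp (-β * (x - ξB) ^ 2)) ξ
        + eW * (b * Real.exp (-β * (ξ - ξB) ^ 2)) *
            ((Real.exp (lam * ξ) - ω * Real.exp (δ * lam * ξ))
              - b * Real.exp (-β * (ξ - ξB) ^ 2)) ≥ 0 := by
  set C := (2*s*β + 2*dB*β + eW*(ω+b))/(4*dB*β^2) with hC
  refine ⟨max 1 C, lt_of_lt_of_le one_pos (le_max_left _ _), ?_⟩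
  intro ξB hξB ξ hξ
  simp only [gauss_deriv, (gauss_hasDerivAt2 b β ξB ξ).deriv]
  set u := ξ - ξB with hu
  set E := Real.exp (-β * u ^ 2) with hE
  have hEpos : 0 < E := Real.exp_pos _
  have hE1 : E ≤ 1 := by
    rw [hE]
    exact Real.exp_le_one_iff.mpr (by nlinarith [sq_nonneg u])
  have hWlb : Real.exp (lam * ξ) - ω * Real.exp (δ * lam * ξ) ≥ -ω := by
    have h1 : (0:ℝ) ≤ Real.exp (lam * ξ) := (Real.exp_pos _).le
    have hξ0 : ξ < 0 := lt_of_le_of_lt hξ hξW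
    have h2 : Real.exp (δ * lam * ξ) ≤ 1 := by
      apply Real.exp_le_one_iff.mpr
      nlinarith [mul_pos (show (0:ℝ) < δ by linarith) hlam]
    nlinarith [mul_le_mul_of_nonneg_left h2 hω.le]
  have hΞ1 : (1:ℝ) ≤ max 1 C := le_max_left _ _
  have hΞC : C ≤ max 1 C := le_max_right _ _
  have huneg : u ≤ -(max 1 C) := by
    have : ξ - ξB ≤ ξW - ξB := by linarith
    have : ξ - ξB ≤ -ξB := by linarith
    linarith
  have hv1 : 1 ≤ -u := by linarith
  have hvC : C ≤ -u := by linarith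
  have hCbound : 4*dB*β^2*C = 2*s*β + 2*dB*β + eW*(ω+b) := by
    rw [hC]; field_simp
  -- key polynomial inequality
  have key : dB * ((-β * (2 * u))^2 + (-β * 2)) + 2*s*β*u + eW*((Real.exp (lam * ξ) - ω * Real.exp (δ * lam * ξ)) - b*E) ≥ 0 := by
    have h1 : eW*((Real.exp (lam * ξ) - ω * Real.exp (δ * lam * ξ)) - b*E) ≥ -(eW*(ω+b)) := by
      nlinarith [mul_le_mul_of_nonneg_left hE1 hb.le, mul_le_mul_of_nonneg_left hWlb heW.le]
    have h2 : 4*dB*β^2*((-u)*(-u)) ≥ (2*s*β + 2*dB*β + eW*(ω+b))*(-u) := by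
      have := mul_le_mul_of_nonneg_right hvC (show (0:ℝ) ≤ 4*dB*β^2*(-u) by positivity)
      nlinarith
    have h3 : (2*s*β + 2*dB*β + eW*(ω+b))*(-u) ≥ 2*s*β*(-u) + 2*dB*β + eW*(ω+b) := by
      nlinarith [mul_le_mul_of_nonneg_right hv1 (show (0:ℝ) ≤ 2*dB*β+eW*(ω+b) by positivity)]
    linarith [h1, h2, h3]
  have expand : dB * (b * E * ((-β * (2 * u))^2 + (-β * 2)))
      - s * (b * E * (-β * (2 * u)))
      + eW * (b * E) * ((Real.exp (lam * ξ) - ω * Real.exp (δ * lam * ξ)) - b * E)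
      = b * E * (dB * ((-β * (2 * u))^2 + (-β * 2)) + 2*s*β*u + eW*((Real.exp (lam * ξ) - ω * Real.exp (δ * lam * ξ)) - b*E)) := by
    ring
  have : 0 ≤ b * E * (dB * ((-β * (2 * u))^2 + (-β * 2)) + 2*s*β*u + eW*((Real.exp (lam * ξ) - ω * Real.exp (δ * lam * ξ)) - b*E)) :=
    mul_nonneg (by positivity) key
  linarith [expand, this]
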